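/- arXiv:2111.00465 — 3 statements merged into one kernel-verified Lean document; each statement's English description precedes it below -/
import Mathlib

section
/- Let t > 0, weights w₁,…,w_K ∈ ℝ, and positive integers q₁,…,q_K. Suppose p₁,…,p_K are independent and uniformly distributed on [-t, t], and for each i, Q_{q_i}(p_i) is an unbiased stochastic fixed-point quantizer with quantization-interval length s_i = t/q_i and conditional variance Var(Q_{q_i}(p_i) | p_i) = u_i·b_i where b_i = rem(|p_i|, s_i) and u_i = s_i - b_i. Then E_{p₁…p_K}[Var(∑_{i=1}^K w_i Q_{q_i}(p_i))] = (t²/6)·∑_{i=1}^K w_i²/q_i². -/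
/-!
Writing `x = s * (⌊x / s⌋ + θ)` with `θ = fract (x / s)`, the conditional variance `u * b` is
`s² θ (1 - θ)`. This is a continuous `1`-periodic function of `x / s` with mean `1/6` over a
period, and `[-t, t]` consists of `2q` whole periods, so each parameter contributes
`w_i² s_i² / 6` in expectation; the product measure has the uniform laws as its marginals.
-/

open MeasureTheory Set Function intervalIntegral

/-- Variance of rounding `y` up to `⌊y⌋ + 1` with probability `fract y` and down to `⌊y⌋`
otherwise. -/
noncomputable def fractVariance (y : ℝ) : ℝ := Int.fract y * (1 - Int.fract y)

lemma continuous_fractVariance : Continuous fractVariance :=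
  ContinuousOn.comp_fract'' (f := fun y : ℝ => y * (1 - y)) (by fun_prop) (by norm_num)

lemma periodic_fractVariance : Periodic fractVariance 1 := fun y => by
  simp only [fractVariance, Int.fract_add_one]

lemma integral_fractVariance_zero_one : ∫ y in (0 : ℝ)..1, fractVariance y = 1 / 6 := by
  have h_on_Ioo : ∫ y in Ioo (0 : ℝ) 1, fractVariance y = ∫ y in Ioo (0 : ℝ) 1, y * (1 - y) :=
    setIntegral_congr_fun measurableSet_Ioo fun y hy => by
      simp only [fractVariance, Int.fract_eq_self.2 ⟨hy.1.le, hy.2⟩]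
  rw [integral_of_le zero_le_one, integral_Ioc_eq_integral_Ioo, h_on_Ioo,
    ← integral_Ioc_eq_integral_Ioo, ← integral_of_le zero_le_one]
  simp only [mul_sub, mul_one, ← sq]
  rw [intervalIntegral.integral_sub intervalIntegrable_id (intervalIntegrable_pow 2), integral_id,
    integral_pow]
  norm_num

lemma integral_fractVariance_zero_nat (n : ℕ) : ∫ y in (0 : ℝ)..n, fractVariance y = n / 6 := by
  have h := periodic_fractVariance.intervalIntegral_add_zsmul_eq n 0
    fun _ _ => continuous_fractVariance.intervalIntegrable _ _
  simp only [zero_add, zsmul_eq_mul, mul_one, Int.cast_natCast] at h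
  rw [h, integral_fractVariance_zero_one]
  ring

lemma sq_mul_fractVariance_div (s x : ℝ) (hs : s ≠ 0) :
    s ^ 2 * fractVariance (x / s) = (s - (x - s * ⌊x / s⌋)) * (x - s * ⌊x / s⌋) := by
  have h_rem : x - s * ⌊x / s⌋ = s * Int.fract (x / s) := by
    rw [Int.fract]; field_simp
  rw [h_rem, fractVariance]
  ring

lemma intervalIntegral_comp_abs {f : ℝ → ℝ} (hf : Continuous f) {t : ℝ} (ht : 0 ≤ t) :
    ∫ x in -t..t, f |x| = 2 * ∫ x in (0 : ℝ)..t, f x := by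
  have h_int : ∀ a b : ℝ, IntervalIntegrable (fun x => f |x|) volume a b :=
    fun _ _ => (hf.comp continuous_abs).intervalIntegrable _ _
  have h_right : ∫ x in (0 : ℝ)..t, f |x| = ∫ x in (0 : ℝ)..t, f x :=
    integral_congr fun x hx => by
      rw [uIcc_of_le ht] at hx
      simp only [abs_of_nonneg hx.1]
  have h_left : ∫ x in -t..0, f |x| = ∫ x in (0 : ℝ)..t, f |x| := by
    simpa only [abs_neg, neg_zero] using (integral_comp_neg (a := 0) (b := t) fun x => f |x|).symm
  rw [← integral_add_adjacent_intervals (h_int _ 0) (h_int 0 _), h_left, h_right]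
  ring

lemma integral_fractVariance_abs_div {s : ℝ} (hs : 0 < s) (n : ℕ) :
    ∫ x in -(n * s)..(n * s), fractVariance (|x| / s) = n * s / 3 := by
  rw [intervalIntegral_comp_abs (f := fun x => fractVariance (x / s))
      (continuous_fractVariance.comp (continuous_id.div_const s)) (by positivity),
    integral_comp_div _ hs.ne', zero_div, mul_div_cancel_right₀ _ hs.ne',
    integral_fractVariance_zero_nat, smul_eq_mul]
  ring

noncomputable def centeredUniform (t : ℝ) : Measure ℝ :=
  ENNReal.ofReal (1 / (2 * t)) • volume.restrict (Icc (-t) t)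

lemma isProbabilityMeasure_centeredUniform {t : ℝ} (ht : 0 < t) :
    IsProbabilityMeasure (centeredUniform t) := by
  constructor
  rw [centeredUniform, Measure.smul_apply, Measure.restrict_apply_univ, Real.volume_Icc,
    smul_eq_mul, ← ENNReal.ofReal_mul (by positivity)]
  rw [show 1 / (2 * t) * (t - -t) = 1 by field_simp; ring, ENNReal.ofReal_one]

lemma integrable_centeredUniform {f : ℝ → ℝ} (hf : Continuous f) (t : ℝ) :
    Integrable f (centeredUniform t) :=
  hf.integrableOn_Icc.smul_measure ENNReal.ofReal_ne_top

lemma integral_centeredUniform {t : ℝ} (ht : 0 < t) (f : ℝ → ℝ) :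
    ∫ x, f x ∂centeredUniform t = (2 * t)⁻¹ * ∫ x in -t..t, f x := by
  rw [centeredUniform, MeasureTheory.integral_smul_measure, ENNReal.toReal_ofReal (by positivity), smul_eq_mul,
    integral_Icc_eq_integral_Ioc, ← integral_of_le (by linarith), one_div]

lemma integral_centeredUniform_fractVariance_abs_div {t : ℝ} (ht : 0 < t) {q : ℕ} (hq : 0 < q) :
    ∫ x, fractVariance (|x| / (t / q)) ∂centeredUniform t = 1 / 6 := by
  have hq' : (0 : ℝ) < q := Nat.cast_pos.2 hq
  have h_periods : t = q * (t / q) := by field_simp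
  have h_integral := integral_fractVariance_abs_div (s := t / q) (by positivity) q
  rw [← h_periods] at h_integral
  rw [integral_centeredUniform ht, h_integral]
  field_simp
  ring

lemma integral_pi_sum_comp_eval {ι : Type*} [Fintype ι] {X : ι → Type*}
    [∀ i, MeasurableSpace (X i)] (μ : ∀ i, Measure (X i)) [∀ i, IsProbabilityMeasure (μ i)]
    {f : ∀ i, X i → ℝ} (hf : ∀ i, Integrable (f i) (μ i)) :
    ∫ x, ∑ i, f i (x i) ∂Measure.pi μ = ∑ i, ∫ y, f i y ∂μ i := by
  have h_eval := fun i => measurePreserving_eval μ i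
  rw [integral_finsetSum (f := fun i (x : ∀ i, X i) => f i (x i)) Finset.univ
    fun i _ => (h_eval i).integrable_comp_of_integrable (hf i)]
  refine Finset.sum_congr rfl fun i _ => ?_
  have h_meas : AEStronglyMeasurable (f i) ((Measure.pi μ).map (eval i)) :=
    (h_eval i).map_eq ▸ (hf i).aestronglyMeasurable
  rw [← integral_map (h_eval i).measurable.aemeasurable h_meas, (h_eval i).map_eq]

/-- Expected variance of a weighted accumulation of independently stochastically
quantized parameters: if `p₁,…,p_K` are i.i.d. uniform on `[-t,t]` and each quantizer
`Q_{q_i}` has conditional variance `u_i·b_i` with `s_i = t/q_i`, `b_i = rem(|p_i|, s_i)`,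
`u_i = s_i - b_i`, then by independence the variance of `∑ w_i Q_{q_i}(p_i)` given the
parameters is `∑ w_i² u_i b_i`, and its expectation is `(t²/6)·∑ w_i²/q_i²`. -/
theorem expected_variance_weighted_accumulation (K : ℕ) (t : ℝ) (ht : 0 < t)
    (w : Fin K → ℝ) (q : Fin K → ℕ) (hq : ∀ i, 0 < q i)
    (s : Fin K → ℝ) (hs : ∀ i, s i = t / q i)
    (b u : (Fin K → ℝ) → Fin K → ℝ)
    (hb : ∀ p i, b p i = |p i| - s i * ⌊|p i| / s i⌋)
    (hu : ∀ p i, u p i = s i - b p i)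
    (μ : Measure (Fin K → ℝ))
    (hμ : μ = Measure.pi fun _ =>
      (ENNReal.ofReal (1 / (2 * t))) • volume.restrict (Set.Icc (-t) t)) :
    ∫ p, (∑ i, w i ^ 2 * (u p i * b p i)) ∂μ
      = (t ^ 2 / 6) * ∑ i, w i ^ 2 / (q i : ℝ) ^ 2 := by
  have := isProbabilityMeasure_centeredUniform ht
  have hμ' : μ = Measure.pi fun _ => centeredUniform t := hμ
  have hq' : ∀ i, (q i : ℝ) ≠ 0 := fun i => Nat.cast_ne_zero.2 (hq i).ne'
  have h_integrand : ∀ p i, w i ^ 2 * (u p i * b p i)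
      = w i ^ 2 * (s i) ^ 2 * fractVariance (|p i| / s i) := fun p i => by
    rw [mul_assoc, sq_mul_fractVariance_div _ _ (by rw [hs]; exact div_ne_zero ht.ne' (hq' i)),
      hu, hb]
  have h_integrable : ∀ i, Integrable (fun x => w i ^ 2 * (s i) ^ 2 * fractVariance (|x| / s i))
      (centeredUniform t) := fun i =>
    integrable_centeredUniform
      (continuous_const.mul (continuous_fractVariance.comp (continuous_abs.div_const _))) t
  simp only [h_integrand, hμ']
  rw [integral_pi_sum_comp_eval (fun _ => centeredUniform t) h_integrable, Finset.mul_sum]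
  refine Finset.sum_congr rfl fun i _ => ?_
  rw [MeasureTheory.integral_const_mul, hs, integral_centeredUniform_fractVariance_abs_div ht (hq i)]
  field_simp
end

section
/- Let w₁,…,w_K > 0 and q > 0, with a = ∑_j w_j^{2/3} and b = ∑_j w_j²/q². Among all positive real tuples (q₁,…,q_K) satisfying ∑_{i=1}^K w_i²/q_i² = ∑_{i=1}^K w_i²/q², the sum ∑_{i=1}^K q_i is minimized by q_i = sqrt(a/b)·w_i^{2/3}, and the minimum value is q·a^{3/2}/sqrt(∑_j w_j²). -/
/-!
With `xᵢ = wᵢ^{2/3}` the constraint reads `∑ xᵢ³/pᵢ² = b`, and Radon's inequality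
`(∑ xᵢ)³ ≤ (∑ pᵢ)² · ∑ xᵢ³/pᵢ²` gives `a³ ≤ (∑ pᵢ)² b` for every feasible `p`, i.e.
`∑ pᵢ ≥ √(a³/b)`. Equality holds when `pᵢ` is proportional to `xᵢ`, and the scaling
`√(a/b)` is the one that makes such a `p` feasible.
-/

open Finset Real

namespace Finset

variable {ι R : Type*} [Semifield R] [LinearOrder R] [IsStrictOrderedRing R] [ExistsAddOfLE R]

/-- Radon's inequality for the exponent `3`, obtained from two applications of Cauchy–Schwarz:
`(∑ f)² ≤ ∑ g · ∑ f²/g` and `(∑ f²/g)² ≤ ∑ f · ∑ f³/g²`. -/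
theorem pow_three_sum_le_sq_sum_mul_sum_pow_three_div_sq (s : Finset ι) {f g : ι → R}
    (hf : ∀ i ∈ s, 0 ≤ f i) (hg : ∀ i ∈ s, 0 < g i) :
    (∑ i ∈ s, f i) ^ 3 ≤ (∑ i ∈ s, g i) ^ 2 * ∑ i ∈ s, f i ^ 3 / g i ^ 2 := by
  have hA : 0 ≤ ∑ i ∈ s, f i := sum_nonneg hf
  have hC : 0 ≤ ∑ i ∈ s, f i ^ 3 / g i ^ 2 :=
    sum_nonneg fun i hi ↦ div_nonneg (pow_nonneg (hf i hi) 3) (sq_nonneg _)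
  have titu : (∑ i ∈ s, f i) ^ 2 ≤ (∑ i ∈ s, g i) * ∑ i ∈ s, f i ^ 2 / g i :=
    sum_sq_le_sum_mul_sum_of_sq_le_mul s (fun i hi ↦ (hg i hi).le)
      (fun i hi ↦ div_nonneg (sq_nonneg _) (hg i hi).le)
      fun i hi ↦ by rw [mul_div_cancel₀ _ (hg i hi).ne']
  have cauchy : (∑ i ∈ s, f i ^ 2 / g i) ^ 2 ≤ (∑ i ∈ s, f i) * ∑ i ∈ s, f i ^ 3 / g i ^ 2 :=
    sum_sq_le_sum_mul_sum_of_sq_le_mul s hf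
      (fun i hi ↦ div_nonneg (pow_nonneg (hf i hi) 3) (sq_nonneg _))
      fun i _ ↦ (by ring : (f i ^ 2 / g i) ^ 2 = f i * (f i ^ 3 / g i ^ 2)).le
  obtain hA0 | hApos := hA.eq_or_lt
  · rw [← hA0, zero_pow three_ne_zero]
    exact mul_nonneg (sq_nonneg _) hC
  refine le_of_mul_le_mul_left ?_ hApos
  calc (∑ i ∈ s, f i) * (∑ i ∈ s, f i) ^ 3 = ((∑ i ∈ s, f i) ^ 2) ^ 2 := by ring
    _ ≤ ((∑ i ∈ s, g i) * ∑ i ∈ s, f i ^ 2 / g i) ^ 2 := pow_le_pow_left₀ (sq_nonneg _) titu 2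
    _ = (∑ i ∈ s, g i) ^ 2 * (∑ i ∈ s, f i ^ 2 / g i) ^ 2 := mul_pow _ _ 2
    _ ≤ (∑ i ∈ s, g i) ^ 2 * ((∑ i ∈ s, f i) * ∑ i ∈ s, f i ^ 3 / g i ^ 2) :=
        mul_le_mul_of_nonneg_left cauchy (sq_nonneg _)
    _ = _ := by ring

end Finset

lemma rpow_two_thirds_pow_three {x : ℝ} (hx : 0 ≤ x) : (x ^ ((2 : ℝ) / 3)) ^ 3 = x ^ 2 := by
  rw [← rpow_mul_natCast hx, ← rpow_natCast]
  norm_num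

lemma rpow_three_halves_eq_sqrt_mul {x : ℝ} (hx : 0 ≤ x) : x ^ ((3 : ℝ) / 2) = √x * x := by
  rw [sqrt_eq_rpow, ← rpow_add_one' hx (by norm_num)]
  norm_num

section Budget

variable {ι : Type*} (s : Finset ι) {w : ι → ℝ}

lemma pow_three_sum_rpow_two_thirds_le (hw : ∀ i ∈ s, 0 ≤ w i) {p : ι → ℝ}
    (hp : ∀ i ∈ s, 0 < p i) :
    (∑ i ∈ s, w i ^ ((2 : ℝ) / 3)) ^ 3 ≤ (∑ i ∈ s, p i) ^ 2 * ∑ i ∈ s, w i ^ 2 / p i ^ 2 := by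
  have hcube : ∀ i ∈ s, w i ^ 2 / p i ^ 2 = (w i ^ ((2 : ℝ) / 3)) ^ 3 / p i ^ 2 :=
    fun i hi ↦ by rw [rpow_two_thirds_pow_three (hw i hi)]
  rw [sum_congr rfl hcube]
  exact pow_three_sum_le_sq_sum_mul_sum_pow_three_div_sq s (fun i hi ↦ rpow_nonneg (hw i hi) _) hp

lemma sum_sq_div_sq_const_mul_rpow_two_thirds (hw : ∀ i ∈ s, 0 < w i) (c : ℝ) :
    ∑ i ∈ s, w i ^ 2 / (c * w i ^ ((2 : ℝ) / 3)) ^ 2 = (∑ i ∈ s, w i ^ ((2 : ℝ) / 3)) / c ^ 2 := by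
  rw [sum_div]
  refine sum_congr rfl fun i hi ↦ ?_
  have hx : w i ^ ((2 : ℝ) / 3) ≠ 0 := (rpow_pos_of_pos (hw i hi) _).ne'
  rw [← rpow_two_thirds_pow_three (hw i hi).le, mul_pow, pow_succ' _ 2,
    mul_div_mul_right _ _ (pow_ne_zero 2 hx)]

end Budget

lemma sqrt_div_mul_le_of_pow_three_le {a b S : ℝ} (ha : 0 ≤ a) (hb : 0 ≤ b) (hS : 0 ≤ S)
    (h : a ^ 3 ≤ S ^ 2 * b) : √(a / b) * a ≤ S := by
  refine le_of_pow_le_pow_left₀ two_ne_zero hS ?_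
  calc (√(a / b) * a) ^ 2 = a ^ 3 / b := by
        rw [mul_pow, sq_sqrt (div_nonneg ha hb)]; ring
    _ ≤ S ^ 2 := div_le_of_le_mul₀ hb (sq_nonneg S) h

theorem dadaquant_theorem1_general (K : ℕ)
    (w : Fin K → ℝ) (hw : ∀ i, 0 < w i) (q : ℝ) (hq : 0 < q)
    (a b : ℝ) (ha : a = ∑ j, w j ^ ((2:ℝ)/3)) (hb : b = ∑ j, w j ^ 2 / q ^ 2)
    (qstar : Fin K → ℝ)
    (hqstar : ∀ i, qstar i = Real.sqrt (a / b) * w i ^ ((2:ℝ)/3)) :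
    (∑ i, w i ^ 2 / (qstar i) ^ 2 = ∑ i, w i ^ 2 / q ^ 2) ∧
    (∀ p : Fin K → ℝ, (∀ i, 0 < p i) →
      (∑ i, w i ^ 2 / (p i) ^ 2 = ∑ i, w i ^ 2 / q ^ 2) →
      ∑ i, qstar i ≤ ∑ i, p i) ∧
    (∑ i, qstar i = q * a ^ ((3:ℝ)/2) / Real.sqrt (∑ j, w j ^ 2)) := by
  have ha₀ : 0 ≤ a := ha ▸ sum_nonneg fun i _ ↦ (rpow_pos_of_pos (hw i) _).le
  have hb_eq : b = (∑ j, w j ^ 2) / q ^ 2 := by rw [hb, sum_div]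
  have hb₀ : 0 ≤ b := hb_eq ▸ by positivity
  have hsum : ∑ i, qstar i = √(a / b) * a := by simp_rw [hqstar, ← mul_sum, ha]
  refine ⟨?_, fun p hp hfeas ↦ ?_, ?_⟩
  · rw [← hb, funext hqstar, sum_sq_div_sq_const_mul_rpow_two_thirds _ fun i _ ↦ hw i, ← ha,
      sq_sqrt (div_nonneg ha₀ hb₀)]
    rcases isEmpty_or_nonempty (Fin K) with _ | _
    · simp [ha, hb]
    · exact div_div_cancel₀ (ha ▸ sum_pos (fun i _ ↦ rpow_pos_of_pos (hw i) _) univ_nonempty).ne'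
  · have radon := pow_three_sum_rpow_two_thirds_le univ (fun i _ ↦ (hw i).le) fun i _ ↦ hp i
    rw [hfeas, ← ha, ← hb] at radon
    exact hsum ▸ sqrt_div_mul_le_of_pow_three_le ha₀ hb₀ (sum_nonneg fun i _ ↦ (hp i).le) radon
  · rw [hsum, hb_eq, div_div_eq_mul_div, sqrt_div' _ (sum_nonneg fun j _ ↦ sq_nonneg (w j)),
      sqrt_mul ha₀, sqrt_sq hq.le, rpow_three_halves_eq_sqrt_mul ha₀]
    ring

/-- Theorem 1 of DAdaQuant (real-valued relaxation): among all positive tuples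
`(q₁,…,q_K)` with `∑ wᵢ²/qᵢ² = ∑ wᵢ²/q²`, the total budget `∑ qᵢ` is minimized by
`qᵢ = sqrt(a/b)·wᵢ^{2/3}` (where `a = ∑ wⱼ^{2/3}`, `b = ∑ wⱼ²/q²`), with minimum
value `q·a^{3/2}/sqrt(∑ wⱼ²)`. -/
theorem dadaquant_theorem1 (K : ℕ) (hK : 0 < K)
    (w : Fin K → ℝ) (hw : ∀ i, 0 < w i) (q : ℝ) (hq : 0 < q)
    (a b : ℝ) (ha : a = ∑ j, w j ^ ((2:ℝ)/3)) (hb : b = ∑ j, w j ^ 2 / q ^ 2)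
    (qstar : Fin K → ℝ)
    (hqstar : ∀ i, qstar i = Real.sqrt (a / b) * w i ^ ((2:ℝ)/3)) :
    (∑ i, w i ^ 2 / (qstar i) ^ 2 = ∑ i, w i ^ 2 / q ^ 2) ∧
    (∀ p : Fin K → ℝ, (∀ i, 0 < p i) →
      (∑ i, w i ^ 2 / (p i) ^ 2 = ∑ i, w i ^ 2 / q ^ 2) →
      ∑ i, qstar i ≤ ∑ i, p i) ∧
    (∑ i, qstar i = q * a ^ ((3:ℝ)/2) / Real.sqrt (∑ j, w j ^ 2)) :=
  dadaquant_theorem1_general K w hw q hq a b ha hb qstar hqstar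
end

section
/- Let w₁, w₂ > 0 with w₁ ≠ w₂, q > 0, a = w₁^{2/3} + w₂^{2/3}, b = (w₁² + w₂²)/q². Then with q_i = sqrt(a/b)·w_i^{2/3}, we have q₁ + q₂ < 2q strictly, i.e. adaptive quantization strictly reduces the communication budget when the weights differ. -/
/-- Two-client case: if `w₁ ≠ w₂` then the adaptive budget is strictly below the
static budget `2q`: with `a = w₁^{2/3} + w₂^{2/3}`, `b = (w₁² + w₂²)/q²` and
`qᵢ = sqrt(a/b)·wᵢ^{2/3}`, we have `q₁ + q₂ < 2q`. -/
theorem two_client_strict_improvement (w₁ w₂ : ℝ) (hw₁ : 0 < w₁) (hw₂ : 0 < w₂)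
    (hne : w₁ ≠ w₂) (q : ℝ) (hq : 0 < q)
    (a b : ℝ) (ha : a = w₁ ^ ((2:ℝ)/3) + w₂ ^ ((2:ℝ)/3))
    (hb : b = (w₁ ^ 2 + w₂ ^ 2) / q ^ 2)
    (q₁ q₂ : ℝ) (hq₁ : q₁ = Real.sqrt (a / b) * w₁ ^ ((2:ℝ)/3))
    (hq₂ : q₂ = Real.sqrt (a / b) * w₂ ^ ((2:ℝ)/3)) :
    q₁ + q₂ < 2 * q := by
  set x := w₁ ^ ((2:ℝ)/3) with hxdef
  set y := w₂ ^ ((2:ℝ)/3) with hydef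
  have hx : 0 < x := Real.rpow_pos_of_pos hw₁ _
  have hy : 0 < y := Real.rpow_pos_of_pos hw₂ _
  have hx3 : x ^ 3 = w₁ ^ 2 := by
    rw [hxdef, ← Real.rpow_natCast (w₁ ^ ((2:ℝ)/3)) 3, ← Real.rpow_mul hw₁.le,
      ← Real.rpow_natCast w₁ 2]
    norm_num
  have hy3 : y ^ 3 = w₂ ^ 2 := by
    rw [hydef, ← Real.rpow_natCast (w₂ ^ ((2:ℝ)/3)) 3, ← Real.rpow_mul hw₂.le,
      ← Real.rpow_natCast w₂ 2]
    norm_num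
  have hxy : x ≠ y := by
    intro h
    apply hne
    have h2 : w₁ ^ 2 = w₂ ^ 2 := by rw [← hx3, ← hy3, h]
    nlinarith
  have ha' : 0 < a := by rw [ha]; positivity
  have hb' : 0 < b := by rw [hb]; positivity
  have hS : q₁ + q₂ = Real.sqrt (a / b) * a := by rw [hq₁, hq₂, ha]; ring
  rw [hS]
  have hkey : (Real.sqrt (a / b) * a) ^ 2 < (2 * q) ^ 2 := by
    have hsq : Real.sqrt (a / b) ^ 2 = a / b := Real.sq_sqrt (by positivity)
    have hcube : a ^ 3 < 4 * (x ^ 3 + y ^ 3) := by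
      rw [ha]
      nlinarith [sq_nonneg (x - y), sub_ne_zero.mpr hxy, mul_pos hx hy,
        mul_pos (mul_pos hx hy) (add_pos hx hy), pow_two_pos_of_ne_zero (sub_ne_zero.mpr hxy)]
    have hw : w₁ ^ 2 + w₂ ^ 2 = x ^ 3 + y ^ 3 := by rw [hx3, hy3]
    have : (Real.sqrt (a / b) * a) ^ 2 = a ^ 3 * q ^ 2 / (x ^ 3 + y ^ 3) := by
      rw [mul_pow, hsq, hb, hw]
      field_simp
    rw [this]
    rw [div_lt_iff₀ (by positivity)]
    nlinarith [mul_pos (sub_pos.mpr hcube) (pow_pos hq 2)]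
  exact lt_of_pow_lt_pow_left₀ 2 (by positivity) hkey
end
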